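/- Let G be a finite connected bipartite simple graph. Then G is 2-γ'MB-critical if and only if G belongs to the family 𝓑. -/
import Mathlib


/-- `D` is a dominating set of `G`: every vertex not in `D` has a neighbor in `D`. -/
def Dominating {V : Type*} (G : SimpleGraph V) (D : Set V) : Prop :=
  ∀ v, v ∉ D → ∃ d ∈ D, G.Adj d v

/-- Dominator wins the S-game on `G` within one move. -/
def WinsWithin1 {V : Type*} (G : SimpleGraph V) : Prop :=
  ∀ s₁ : V, ∃ d₁, d₁ ≠ s₁ ∧ Dominating G {d₁}

/-- Dominator wins the S-game on `G` within two moves. -/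
def WinsWithin2 {V : Type*} (G : SimpleGraph V) : Prop :=
  ∀ s₁ : V, ∃ d₁, d₁ ≠ s₁ ∧
    (Dominating G {d₁} ∨
      ∀ s₂, s₂ ∉ ({s₁, d₁} : Set V) →
        ∃ d₂, d₂ ∉ ({s₁, d₁, s₂} : Set V) ∧ Dominating G {d₁, d₂})

/-- `γ'MB(G) = 2`: Dominator wins the S-game within two moves but not within one. -/
def MBPrimeEqTwo {V : Type*} (G : SimpleGraph V) : Prop :=
  WinsWithin2 G ∧ ¬ WinsWithin1 G

/-- `G` is `2`-`γ'MB`-critical: `γ'MB(G) = 2` and for every edge `e`, Dominator does not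
win the S-game on `G - e` within two moves. -/
def Critical2 {V : Type*} (G : SimpleGraph V) : Prop :=
  MBPrimeEqTwo G ∧ ∀ u v : V, G.Adj u v → ¬ WinsWithin2 (G.deleteEdges {s(u, v)})

/-- `G` belongs to the family `𝓑`: either `G ≅ K_{2,m}` with `m ≥ 3`, or `G` is bipartite
with parts `V₁, V₂` of sizes `m, n ≥ 3`, exactly two vertices of `V₁` have degree `n`,
exactly two vertices of `V₂` have degree `m`, and all other vertices have degree `2`. -/
def InFamilyB {V : Type*} (G : SimpleGraph V) : Prop :=
  (∃ m : ℕ, 3 ≤ m ∧ Nonempty (G ≃g completeBipartiteGraph (Fin 2) (Fin m))) ∨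
  (∃ V₁ V₂ : Set V, Disjoint V₁ V₂ ∧ V₁ ∪ V₂ = Set.univ ∧
    3 ≤ V₁.ncard ∧ 3 ≤ V₂.ncard ∧
    (∀ u v, G.Adj u v → (u ∈ V₁ ∧ v ∈ V₂) ∨ (u ∈ V₂ ∧ v ∈ V₁)) ∧
    {v ∈ V₁ | (G.neighborSet v).ncard = V₂.ncard}.ncard = 2 ∧
    (∀ v ∈ V₁, (G.neighborSet v).ncard = V₂.ncard ∨ (G.neighborSet v).ncard = 2) ∧
    {v ∈ V₂ | (G.neighborSet v).ncard = V₁.ncard}.ncard = 2 ∧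
    (∀ v ∈ V₂, (G.neighborSet v).ncard = V₁.ncard ∨ (G.neighborSet v).ncard = 2))



section Helpers

variable {V : Type*}

lemma exists_mem_ne {S : Set V} (h : 2 ≤ S.ncard) (x : V) : ∃ y ∈ S, y ≠ x := by
  by_contra hc
  push_neg at hc
  have hsub : S ⊆ {x} := fun y hy => hc y hy
  have := Set.ncard_le_ncard hsub (Set.finite_singleton x)
  simp [Set.ncard_singleton] at this
  omega

lemma exists_mem_ne_ne {S : Set V} (h : 3 ≤ S.ncard) (x y : V) :
    ∃ z ∈ S, z ≠ x ∧ z ≠ y := by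
  by_contra hc
  push_neg at hc
  have hsub : S ⊆ {x, y} := by
    intro z hz
    by_cases hzx : z = x
    · simp [hzx]
    · simp [hc z hz hzx]
  have h1 := Set.ncard_le_ncard hsub ((Set.finite_singleton y).insert x)
  have h2 := Set.ncard_insert_le x ({y} : Set V)
  simp [Set.ncard_singleton] at h1 h2
  omega

lemma three_le_ncard {S : Set V} {x y z : V} (hx : x ∈ S) (hy : y ∈ S) (hz : z ∈ S)
    (hxy : x ≠ y) (hxz : x ≠ z) (hyz : y ≠ z) [Finite V] : 3 ≤ S.ncard := by
  have hsub : ({x, y, z} : Set V) ⊆ S := by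
    intro w hw
    rcases hw with h | h | h <;> simp_all
  have h3 : ({x, y, z} : Set V).ncard = 3 := by
    rw [Set.ncard_insert_of_notMem (by simp [hxy, hxz]),
      Set.ncard_pair hyz]
  have := Set.ncard_le_ncard hsub (Set.toFinite S)
  omega

lemma pick_of_three {u₁ u₂ u₃ : V} (h12 : u₁ ≠ u₂) (h13 : u₁ ≠ u₃) (h23 : u₂ ≠ u₃)
    (s d : V) : ∃ z, z ≠ s ∧ z ≠ d := by
  rcases eq_or_ne u₁ s with h1s | h1s
  · rcases eq_or_ne u₂ d with h2d | h2d
    · exact ⟨u₃, by subst h1s; exact h13.symm, by subst h2d; exact h23.symm⟩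
    · exact ⟨u₂, by subst h1s; exact h12.symm, h2d⟩
  · rcases eq_or_ne u₁ d with h1d | h1d
    · rcases eq_or_ne u₂ s with h2s | h2s
      · exact ⟨u₃, by subst h2s; exact h23.symm, by subst h1d; exact h13.symm⟩
      · exact ⟨u₂, h2s, by subst h1d; exact h12.symm⟩
    · exact ⟨u₁, h1s, h1d⟩

end Helpers

section Game

variable {V : Type*} {G : SimpleGraph V}

lemma not_dom_single {d z : V} (hz : z ≠ d) (hnadj : ¬ G.Adj d z) :
    ¬ Dominating G {d} := by
  intro h
  obtain ⟨w, hw, hadj⟩ := h z (by simp [hz])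
  rw [Set.mem_singleton_iff] at hw
  exact hnadj (hw ▸ hadj)

lemma not_wins1_of [Nonempty V] (h : ∀ x : V, ∃ y, y ≠ x ∧ ¬ G.Adj x y) :
    ¬ WinsWithin1 G := by
  intro hw
  obtain ⟨d₁, _, hdom⟩ := hw (Classical.arbitrary V)
  obtain ⟨y, hy, hna⟩ := h d₁
  obtain ⟨w, hw', hadj⟩ := hdom y (by simp [hy])
  rw [Set.mem_singleton_iff] at hw'
  exact hna (hw' ▸ hadj)

lemma not_wins2_of_bound (s₁ : V)
    (hV : ∀ s d : V, ∃ z, z ≠ s ∧ z ≠ d)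
    (h : ∀ d₁, d₁ ≠ s₁ → ¬ Dominating G {d₁} ∧
        ∃ t, ∀ d₂, d₂ ≠ s₁ → d₂ ≠ d₁ → Dominating G {d₁, d₂} → d₂ = t) :
    ¬ WinsWithin2 G := by
  intro hw
  obtain ⟨d₁, hne, hcase⟩ := hw s₁
  obtain ⟨hnd, t, ht⟩ := h d₁ hne
  rcases hcase with h1 | h2
  · exact hnd h1
  · by_cases htm : t ≠ s₁ ∧ t ≠ d₁
    · have hmem : t ∉ ({s₁, d₁} : Set V) := by
        simp only [Set.mem_insert_iff, Set.mem_singleton_iff]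
        exact not_or.mpr htm
      obtain ⟨d₂, hd₂, hdom⟩ := h2 t hmem
      simp only [Set.mem_insert_iff, Set.mem_singleton_iff, not_or] at hd₂
      exact hd₂.2.2 (ht d₂ hd₂.1 hd₂.2.1 hdom)
    · obtain ⟨z, hz1, hz2⟩ := hV s₁ d₁
      have hmem : z ∉ ({s₁, d₁} : Set V) := by
        simp only [Set.mem_insert_iff, Set.mem_singleton_iff]
        exact not_or.mpr ⟨hz1, hz2⟩
      obtain ⟨d₂, hd₂, hdom⟩ := h2 z hmem
      simp only [Set.mem_insert_iff, Set.mem_singleton_iff, not_or] at hd₂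
      have := ht d₂ hd₂.1 hd₂.2.1 hdom
      rw [not_and_or, not_ne_iff, not_ne_iff] at htm
      rcases htm with h | h
      · exact hd₂.1 (this.trans h)
      · exact hd₂.2.1 (this.trans h)

lemma pair_dominates {A B : Set V} (hU : A ∪ B = Set.univ)
    {x y : V} (hxf : ∀ b ∈ B, G.Adj x b) (hyf : ∀ a ∈ A, G.Adj y a) :
    Dominating G {x, y} := by
  intro v _
  have hvAB : v ∈ A ∪ B := hU ▸ Set.mem_univ v
  rcases hvAB with hvA | hvB
  · exact ⟨y, by simp, hyf v hvA⟩
  · exact ⟨x, by simp, hxf v hvB⟩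

lemma wins2_branch {s₁ x y₁ y₂ : V}
    (hd : x ≠ s₁) (hy1 : y₁ ≠ s₁) (hy2 : y₂ ≠ s₁) (hxy1 : y₁ ≠ x) (hxy2 : y₂ ≠ x)
    (hyy : y₁ ≠ y₂)
    (hdom1 : Dominating G {x, y₁}) (hdom2 : Dominating G {x, y₂}) :
    ∃ d₁, d₁ ≠ s₁ ∧ (Dominating G {d₁} ∨ ∀ s₂, s₂ ∉ ({s₁, d₁} : Set V) →
      ∃ d₂, d₂ ∉ ({s₁, d₁, s₂} : Set V) ∧ Dominating G {d₁, d₂}) := by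
  refine ⟨x, hd, Or.inr fun s₂ _ => ?_⟩
  by_cases h : s₂ = y₁
  · refine ⟨y₂, ?_, hdom2⟩
    simp only [Set.mem_insert_iff, Set.mem_singleton_iff]
    push_neg
    exact ⟨hy2, hxy2, h ▸ hyy.symm⟩
  · refine ⟨y₁, ?_, hdom1⟩
    simp only [Set.mem_insert_iff, Set.mem_singleton_iff]
    push_neg
    exact ⟨hy1, hxy1, fun hh => h hh.symm⟩

lemma not_adj_same {A B : Set V} (hdisj : Disjoint A B)
    (hcross : ∀ u v, G.Adj u v → (u ∈ A ∧ v ∈ B) ∨ (u ∈ B ∧ v ∈ A))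
    {u v : V} (hu : u ∈ A) (hv : v ∈ A) : ¬ G.Adj u v := by
  intro h
  rcases hcross u v h with ⟨_, h2⟩ | ⟨h1, _⟩
  · exact Set.disjoint_left.mp hdisj hv h2
  · exact Set.disjoint_left.mp hdisj hu h1

lemma mem_ne_of_disjoint {A B : Set V} (hdisj : Disjoint A B)
    {u v : V} (hu : u ∈ A) (hv : v ∈ B) : u ≠ v := by
  intro h
  exact Set.disjoint_left.mp hdisj hu (h ▸ hv)

lemma wins2_of_fulls {A B : Set V} (hdisj : Disjoint A B) (hU : A ∪ B = Set.univ)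
    {a₁ a₂ b₁ b₂ : V} (ha₁ : a₁ ∈ A) (ha₂ : a₂ ∈ A) (hb₁ : b₁ ∈ B) (hb₂ : b₂ ∈ B)
    (haa : a₁ ≠ a₂) (hbb : b₁ ≠ b₂)
    (hfa₁ : ∀ b ∈ B, G.Adj a₁ b) (hfa₂ : ∀ b ∈ B, G.Adj a₂ b)
    (hfb₁ : ∀ a ∈ A, G.Adj b₁ a) (hfb₂ : ∀ a ∈ A, G.Adj b₂ a) :
    WinsWithin2 G := by
  have hab11 := mem_ne_of_disjoint hdisj ha₁ hb₁
  have hab12 := mem_ne_of_disjoint hdisj ha₁ hb₂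
  have hab21 := mem_ne_of_disjoint hdisj ha₂ hb₁
  have hab22 := mem_ne_of_disjoint hdisj ha₂ hb₂
  have dom11 : Dominating G {a₁, b₁} := pair_dominates hU hfa₁ hfb₁
  have dom12 : Dominating G {a₁, b₂} := pair_dominates hU hfa₁ hfb₂
  have dom21 : Dominating G {a₂, b₁} := pair_dominates hU hfa₂ hfb₁
  have dom22 : Dominating G {a₂, b₂} := pair_dominates hU hfa₂ hfb₂
  have dom11' : Dominating G {b₁, a₁} := Set.pair_comm a₁ b₁ ▸ dom11
  have dom12' : Dominating G {b₂, a₁} := Set.pair_comm a₁ b₂ ▸ dom12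
  have dom21' : Dominating G {b₁, a₂} := Set.pair_comm a₂ b₁ ▸ dom21
  have dom22' : Dominating G {b₂, a₂} := Set.pair_comm a₂ b₂ ▸ dom22
  intro s₁
  by_cases h1 : s₁ = a₁
  · subst h1
    exact wins2_branch haa.symm hab11.symm hab12.symm hab21.symm hab22.symm
      hbb dom21 dom22
  by_cases h2 : s₁ = a₂
  · subst h2
    exact wins2_branch haa hab21.symm hab22.symm hab11.symm hab12.symm
      hbb dom11 dom12
  by_cases h3 : s₁ = b₁
  · subst h3
    exact wins2_branch hbb.symm hab11 hab21 hab12 hab22 haa dom12' dom22'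
  by_cases h4 : s₁ = b₂
  · subst h4
    exact wins2_branch hbb hab12 hab22 hab11 hab21 haa dom11' dom21'
  · exact wins2_branch (fun h => h1 h.symm) (fun h => h3 h.symm) (fun h => h4 h.symm)
      hab11.symm hab12.symm hbb dom11 dom12

end Game

section WinsChar

variable {V : Type*} {G : SimpleGraph V}

lemma fulls_of_wins2 [Finite V] {A B : Set V} (hdisj : Disjoint A B)
    (hU : A ∪ B = Set.univ)
    (hcross : ∀ u v, G.Adj u v → (u ∈ A ∧ v ∈ B) ∨ (u ∈ B ∧ v ∈ A))
    (hA : 3 ≤ A.ncard) (hB : 3 ≤ B.ncard) (hw : WinsWithin2 G) :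
    ∃ a₁ a₂, a₁ ∈ A ∧ a₂ ∈ A ∧ a₁ ≠ a₂ ∧
      (∀ b ∈ B, G.Adj a₁ b) ∧ (∀ b ∈ B, G.Adj a₂ b) := by
  have hcross' : ∀ u v, G.Adj u v → (u ∈ B ∧ v ∈ A) ∨ (u ∈ A ∧ v ∈ B) :=
    fun u v h => Or.symm (hcross u v h)
  have hside : ∀ v : V, v ∈ A ∨ v ∈ B := by
    intro v
    have : v ∈ A ∪ B := by rw [hU]; trivial
    exact this
  by_contra hc
  push_neg at hc
  have main : ∀ s₁ : V, (∀ x ∈ A, (∀ b ∈ B, G.Adj x b) → x = s₁) → False := by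
    intro s₁ hkey
    refine not_wins2_of_bound s₁ (fun s d => ?_) (fun d₁ hne => ?_) hw
    · obtain ⟨z, _, h1, h2⟩ := exists_mem_ne_ne hA s d
      exact ⟨z, h1, h2⟩
    constructor
    · rcases hside d₁ with hd₁ | hd₁
      · obtain ⟨z, hzA, hz⟩ := exists_mem_ne (S := A) (by omega) d₁
        exact not_dom_single hz (not_adj_same hdisj hcross hd₁ hzA)
      · obtain ⟨z, hzB, hz⟩ := exists_mem_ne (S := B) (by omega) d₁
        exact not_dom_single hz (not_adj_same hdisj.symm hcross' hd₁ hzB)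
    · rcases hside d₁ with hd₁ | hd₁
      · -- d₁ ∈ A, not full
        have hnf : ¬ ∀ b ∈ B, G.Adj d₁ b := fun hf => hne (hkey d₁ hd₁ hf)
        push_neg at hnf
        obtain ⟨y₀, hy₀B, hy₀na⟩ := hnf
        refine ⟨y₀, fun d₂ hd₂s hd₂d hdom => ?_⟩
        rcases hside d₂ with hd₂ | hd₂
        · exfalso
          obtain ⟨w, hwA, hw1, hw2⟩ := exists_mem_ne_ne hA d₁ d₂
          have hwmem : w ∉ ({d₁, d₂} : Set V) := by
            simp only [Set.mem_insert_iff, Set.mem_singleton_iff, not_or]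
            exact ⟨hw1, hw2⟩
          obtain ⟨d, hd, hadj⟩ := hdom w hwmem
          simp only [Set.mem_insert_iff, Set.mem_singleton_iff] at hd
          rcases hd with rfl | rfl
          · exact not_adj_same hdisj hcross hd₁ hwA hadj
          · exact not_adj_same hdisj hcross hd₂ hwA hadj
        · by_cases hq : d₂ = y₀
          · exact hq
          exfalso
          have hy₀mem : y₀ ∉ ({d₁, d₂} : Set V) := by
            simp only [Set.mem_insert_iff, Set.mem_singleton_iff, not_or]
            exact ⟨(mem_ne_of_disjoint hdisj hd₁ hy₀B).symm, fun h => hq h.symm⟩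
          obtain ⟨d, hd, hadj⟩ := hdom y₀ hy₀mem
          simp only [Set.mem_insert_iff, Set.mem_singleton_iff] at hd
          rcases hd with rfl | rfl
          · exact hy₀na hadj
          · exact not_adj_same hdisj.symm hcross' hd₂ hy₀B hadj
      · -- d₁ ∈ B
        by_cases hfb : ∀ a ∈ A, G.Adj d₁ a
        · refine ⟨s₁, fun d₂ hd₂s hd₂d hdom => ?_⟩
          rcases hside d₂ with hd₂ | hd₂
          · -- d₂ ∈ A : show d₂ is full, hence = s₁
            refine hkey d₂ hd₂ (fun b hbB => ?_)
            by_cases hb : b = d₁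
            · exact hb ▸ (hfb d₂ hd₂).symm
            · have hbmem : b ∉ ({d₁, d₂} : Set V) := by
                simp only [Set.mem_insert_iff, Set.mem_singleton_iff, not_or]
                exact ⟨hb, mem_ne_of_disjoint hdisj.symm hbB hd₂⟩
              obtain ⟨d, hd, hadj⟩ := hdom b hbmem
              simp only [Set.mem_insert_iff, Set.mem_singleton_iff] at hd
              rcases hd with rfl | rfl
              · exact absurd hadj (not_adj_same hdisj.symm hcross' hd₁ hbB)
              · exact hadj
          · exfalso
            obtain ⟨w, hwB, hw1, hw2⟩ := exists_mem_ne_ne hB d₁ d₂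
            have hwmem : w ∉ ({d₁, d₂} : Set V) := by
              simp only [Set.mem_insert_iff, Set.mem_singleton_iff, not_or]
              exact ⟨hw1, hw2⟩
            obtain ⟨d, hd, hadj⟩ := hdom w hwmem
            simp only [Set.mem_insert_iff, Set.mem_singleton_iff] at hd
            rcases hd with rfl | rfl
            · exact not_adj_same hdisj.symm hcross' hd₁ hwB hadj
            · exact not_adj_same hdisj.symm hcross' hd₂ hwB hadj
        · push_neg at hfb
          obtain ⟨x₀, hx₀A, hx₀na⟩ := hfb
          refine ⟨x₀, fun d₂ hd₂s hd₂d hdom => ?_⟩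
          rcases hside d₂ with hd₂ | hd₂
          · by_cases hq : d₂ = x₀
            · exact hq
            exfalso
            have hxmem : x₀ ∉ ({d₁, d₂} : Set V) := by
              simp only [Set.mem_insert_iff, Set.mem_singleton_iff, not_or]
              exact ⟨mem_ne_of_disjoint hdisj hx₀A hd₁, fun h => hq h.symm⟩
            obtain ⟨d, hd, hadj⟩ := hdom x₀ hxmem
            simp only [Set.mem_insert_iff, Set.mem_singleton_iff] at hd
            rcases hd with rfl | rfl
            · exact hx₀na hadj
            · exact not_adj_same hdisj hcross hd₂ hx₀A hadj
          · exfalso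
            obtain ⟨w, hwB, hw1, hw2⟩ := exists_mem_ne_ne hB d₁ d₂
            have hwmem : w ∉ ({d₁, d₂} : Set V) := by
              simp only [Set.mem_insert_iff, Set.mem_singleton_iff, not_or]
              exact ⟨hw1, hw2⟩
            obtain ⟨d, hd, hadj⟩ := hdom w hwmem
            simp only [Set.mem_insert_iff, Set.mem_singleton_iff] at hd
            rcases hd with rfl | rfl
            · exact not_adj_same hdisj.symm hcross' hd₁ hwB hadj
            · exact not_adj_same hdisj.symm hcross' hd₂ hwB hadj
  by_cases hex : ∃ a ∈ A, ∀ b ∈ B, G.Adj a b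
  · obtain ⟨a, haA, hafull⟩ := hex
    refine main a (fun x hxA hxfull => ?_)
    by_contra hxa
    obtain ⟨b, hbB, hnadj⟩ := hc x a hxA haA hxa hxfull
    exact hnadj (hafull b hbB)
  · push_neg at hex
    have hAne : A.Nonempty := Set.nonempty_of_ncard_ne_zero (by omega)
    refine main hAne.choose (fun x hxA hxfull => ?_)
    exfalso
    obtain ⟨b, hbB, hnadj⟩ := hex x hxA
    exact hnadj (hxfull b hbB)

end WinsChar

section BigCase

variable {V : Type*} {G : SimpleGraph V}

lemma adj_del {p q a b : V} (h : G.Adj a b) (h1 : a ≠ p ∨ b ≠ q) (h2 : a ≠ q ∨ b ≠ p) :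
    (G.deleteEdges {s(p, q)}).Adj a b := by
  rw [SimpleGraph.deleteEdges_adj]
  refine ⟨h, ?_⟩
  simp only [Set.mem_singleton_iff, Sym2.eq_iff]
  rintro (⟨rfl, rfl⟩ | ⟨rfl, rfl⟩)
  · rcases h1 with h1 | h1 <;> exact h1 rfl
  · rcases h2 with h2 | h2 <;> exact h2 rfl

lemma no_third_full [Finite V] {A B : Set V} (hdisj : Disjoint A B)
    (hB : 3 ≤ B.ncard)
    {a₁ a₂ b₁ b₂ : V} (ha₁ : a₁ ∈ A) (ha₂ : a₂ ∈ A) (hb₁ : b₁ ∈ B) (hb₂ : b₂ ∈ B)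
    (haa : a₁ ≠ a₂) (hbb : b₁ ≠ b₂)
    (hfa₁ : ∀ b ∈ B, G.Adj a₁ b) (hfa₂ : ∀ b ∈ B, G.Adj a₂ b)
    (hfb₁ : ∀ a ∈ A, G.Adj b₁ a) (hfb₂ : ∀ a ∈ A, G.Adj b₂ a)
    (hU : A ∪ B = Set.univ)
    (hcrit : ∀ u v : V, G.Adj u v → ¬ WinsWithin2 (G.deleteEdges {s(u, v)})) :
    ∀ x ∈ A, (∀ b ∈ B, G.Adj x b) → x = a₁ ∨ x = a₂ := by
  intro x hxA hxf
  by_contra hcon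
  push_neg at hcon
  obtain ⟨hx1, hx2⟩ := hcon
  by_cases hyn : ∀ y ∈ B, ∀ a ∈ A, G.Adj y a
  · obtain ⟨b₃, hb₃B, hb₃1, hb₃2⟩ := exists_mem_ne_ne hB b₁ b₂
    refine hcrit x b₁ (hxf b₁ hb₁) ?_
    refine wins2_of_fulls hdisj hU ha₁ ha₂ hb₂ hb₃B haa (Ne.symm hb₃2) ?_ ?_ ?_ ?_
    · exact fun b hbB => adj_del (hfa₁ b hbB) (Or.inl (fun h => hx1 h.symm))
        (Or.inl (mem_ne_of_disjoint hdisj ha₁ hb₁))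
    · exact fun b hbB => adj_del (hfa₂ b hbB) (Or.inl (fun h => hx2 h.symm))
        (Or.inl (mem_ne_of_disjoint hdisj ha₂ hb₁))
    · exact fun a haA => adj_del (hfb₂ a haA)
        (Or.inl (Ne.symm (mem_ne_of_disjoint hdisj hxA hb₂)))
        (Or.inl (Ne.symm hbb))
    · exact fun a haA => adj_del (hyn b₃ hb₃B a haA)
        (Or.inl (Ne.symm (mem_ne_of_disjoint hdisj hxA hb₃B)))
        (Or.inl hb₃1)
  · push_neg at hyn
    obtain ⟨y₀, hy₀B, a', ha'A, hna⟩ := hyn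
    have hb₁y : b₁ ≠ y₀ := fun h => hna (h ▸ hfb₁ a' ha'A)
    have hb₂y : b₂ ≠ y₀ := fun h => hna (h ▸ hfb₂ a' ha'A)
    refine hcrit x y₀ (hxf y₀ hy₀B) ?_
    refine wins2_of_fulls hdisj hU ha₁ ha₂ hb₁ hb₂ haa hbb ?_ ?_ ?_ ?_
    · exact fun b hbB => adj_del (hfa₁ b hbB) (Or.inl (fun h => hx1 h.symm))
        (Or.inl (mem_ne_of_disjoint hdisj ha₁ hy₀B))
    · exact fun b hbB => adj_del (hfa₂ b hbB) (Or.inl (fun h => hx2 h.symm))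
        (Or.inl (mem_ne_of_disjoint hdisj ha₂ hy₀B))
    · exact fun a haA => adj_del (hfb₁ a haA)
        (Or.inl (Ne.symm (mem_ne_of_disjoint hdisj hxA hb₁))) (Or.inl hb₁y)
    · exact fun a haA => adj_del (hfb₂ a haA)
        (Or.inl (Ne.symm (mem_ne_of_disjoint hdisj hxA hb₂))) (Or.inl hb₂y)

lemma edge_full {A B : Set V} (hdisj : Disjoint A B) (hU : A ∪ B = Set.univ)
    {a₁ a₂ b₁ b₂ : V} (ha₁ : a₁ ∈ A) (ha₂ : a₂ ∈ A) (hb₁ : b₁ ∈ B) (hb₂ : b₂ ∈ B)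
    (haa : a₁ ≠ a₂) (hbb : b₁ ≠ b₂)
    (hfa₁ : ∀ b ∈ B, G.Adj a₁ b) (hfa₂ : ∀ b ∈ B, G.Adj a₂ b)
    (hfb₁ : ∀ a ∈ A, G.Adj b₁ a) (hfb₂ : ∀ a ∈ A, G.Adj b₂ a)
    (hcrit : ∀ u v : V, G.Adj u v → ¬ WinsWithin2 (G.deleteEdges {s(u, v)})) :
    ∀ u v, G.Adj u v → u ∈ A → v ∈ B →
      (∀ b ∈ B, G.Adj u b) ∨ (∀ a ∈ A, G.Adj v a) := by
  intro u v hadj huA hvB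
  by_cases hu : ∀ b ∈ B, G.Adj u b
  · exact Or.inl hu
  by_cases hv : ∀ a ∈ A, G.Adj v a
  · exact Or.inr hv
  exfalso
  refine hcrit u v hadj ?_
  refine wins2_of_fulls hdisj hU ha₁ ha₂ hb₁ hb₂ haa hbb ?_ ?_ ?_ ?_
  · exact fun b hbB => adj_del (hfa₁ b hbB) (Or.inl (fun h => hu (h ▸ hfa₁)))
      (Or.inl (mem_ne_of_disjoint hdisj ha₁ hvB))
  · exact fun b hbB => adj_del (hfa₂ b hbB) (Or.inl (fun h => hu (h ▸ hfa₂)))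
      (Or.inl (mem_ne_of_disjoint hdisj ha₂ hvB))
  · exact fun a haA => adj_del (hfb₁ a haA)
      (Or.inl (Ne.symm (mem_ne_of_disjoint hdisj huA hb₁)))
      (Or.inl (fun h => hv (h ▸ hfb₁)))
  · exact fun a haA => adj_del (hfb₂ a haA)
      (Or.inl (Ne.symm (mem_ne_of_disjoint hdisj huA hb₂)))
      (Or.inl (fun h => hv (h ▸ hfb₂)))

lemma full_iff_ncard [Finite V] {A B : Set V} (hdisj : Disjoint A B)
    (hcross : ∀ u v, G.Adj u v → (u ∈ A ∧ v ∈ B) ∨ (u ∈ B ∧ v ∈ A))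
    {v : V} (hvA : v ∈ A) :
    (∀ b ∈ B, G.Adj v b) ↔ (G.neighborSet v).ncard = B.ncard := by
  have hsub : G.neighborSet v ⊆ B := by
    intro w hw
    rw [SimpleGraph.mem_neighborSet] at hw
    rcases hcross v w hw with ⟨_, h⟩ | ⟨h, _⟩
    · exact h
    · exact absurd hvA (Set.disjoint_right.mp hdisj h)
  constructor
  · intro hf
    have : G.neighborSet v = B := by
      apply Set.Subset.antisymm hsub
      intro b hbB
      rw [SimpleGraph.mem_neighborSet]
      exact hf b hbB
    rw [this]
  · intro hn
    have heq : G.neighborSet v = B :=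
      Set.eq_of_subset_of_ncard_le hsub (le_of_eq hn.symm) (Set.toFinite B)
    intro b hbB
    rw [← SimpleGraph.mem_neighborSet, heq]
    exact hbB

lemma side_conditions [Finite V] {A B : Set V} (hdisj : Disjoint A B)
    (hcross : ∀ u v, G.Adj u v → (u ∈ A ∧ v ∈ B) ∨ (u ∈ B ∧ v ∈ A))
    {a₁ a₂ b₁ b₂ : V} (ha₁ : a₁ ∈ A) (ha₂ : a₂ ∈ A) (hb₁ : b₁ ∈ B) (hb₂ : b₂ ∈ B)
    (haa : a₁ ≠ a₂) (hbb : b₁ ≠ b₂)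
    (hfa₁ : ∀ b ∈ B, G.Adj a₁ b) (hfa₂ : ∀ b ∈ B, G.Adj a₂ b)
    (hfb₁ : ∀ a ∈ A, G.Adj b₁ a) (hfb₂ : ∀ a ∈ A, G.Adj b₂ a)
    (h3A : ∀ x ∈ A, (∀ b ∈ B, G.Adj x b) → x = a₁ ∨ x = a₂)
    (h3B : ∀ y ∈ B, (∀ a ∈ A, G.Adj y a) → y = b₁ ∨ y = b₂)
    (hEF : ∀ u v, G.Adj u v → u ∈ A → v ∈ B →
      (∀ b ∈ B, G.Adj u b) ∨ (∀ a ∈ A, G.Adj v a)) :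
    {v ∈ A | (G.neighborSet v).ncard = B.ncard}.ncard = 2 ∧
      ∀ v ∈ A, (G.neighborSet v).ncard = B.ncard ∨ (G.neighborSet v).ncard = 2 := by
  constructor
  · have hseteq : {v ∈ A | (G.neighborSet v).ncard = B.ncard} = {a₁, a₂} := by
      ext v
      simp only [Set.mem_setOf_eq, Set.mem_insert_iff, Set.mem_singleton_iff]
      constructor
      · rintro ⟨hvA, hv⟩
        exact h3A v hvA ((full_iff_ncard hdisj hcross hvA).mpr hv)
      · rintro (rfl | rfl)
        · exact ⟨ha₁, (full_iff_ncard hdisj hcross ha₁).mp hfa₁⟩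
        · exact ⟨ha₂, (full_iff_ncard hdisj hcross ha₂).mp hfa₂⟩
    rw [hseteq, Set.ncard_pair haa]
  · intro v hvA
    by_cases hf : ∀ b ∈ B, G.Adj v b
    · exact Or.inl ((full_iff_ncard hdisj hcross hvA).mp hf)
    · right
      have hNeq : G.neighborSet v = {b₁, b₂} := by
        apply Set.Subset.antisymm
        · intro w hw
          rw [SimpleGraph.mem_neighborSet] at hw
          have hwB : w ∈ B := by
            rcases hcross v w hw with ⟨_, h⟩ | ⟨h, _⟩
            · exact h
            · exact absurd hvA (Set.disjoint_right.mp hdisj h)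
          rcases hEF v w hw hvA hwB with h | h
          · exact absurd h hf
          · simpa using h3B w hwB h
        · intro w hw
          simp only [Set.mem_insert_iff, Set.mem_singleton_iff] at hw
          rw [SimpleGraph.mem_neighborSet]
          rcases hw with rfl | rfl
          · exact (hfb₁ v hvA).symm
          · exact (hfb₂ v hvA).symm
      rw [hNeq, Set.ncard_pair hbb]

lemma famB_right [Finite V] {A B : Set V} (hdisj : Disjoint A B)
    (hU : A ∪ B = Set.univ)
    (hcross : ∀ u v, G.Adj u v → (u ∈ A ∧ v ∈ B) ∨ (u ∈ B ∧ v ∈ A))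
    (hA : 3 ≤ A.ncard) (hB : 3 ≤ B.ncard) (hw2 : WinsWithin2 G)
    (hcrit : ∀ u v : V, G.Adj u v → ¬ WinsWithin2 (G.deleteEdges {s(u, v)})) :
    InFamilyB G := by
  have hcross' : ∀ u v, G.Adj u v → (u ∈ B ∧ v ∈ A) ∨ (u ∈ A ∧ v ∈ B) :=
    fun u v h => Or.symm (hcross u v h)
  have hU' : B ∪ A = Set.univ := by rw [Set.union_comm]; exact hU
  obtain ⟨a₁, a₂, ha₁, ha₂, haa, hfa₁, hfa₂⟩ :=
    fulls_of_wins2 hdisj hU hcross hA hB hw2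
  obtain ⟨b₁, b₂, hb₁, hb₂, hbb, hfb₁, hfb₂⟩ :=
    fulls_of_wins2 hdisj.symm hU' hcross' hB hA hw2
  have h3A := no_third_full hdisj hB ha₁ ha₂ hb₁ hb₂ haa hbb hfa₁ hfa₂ hfb₁ hfb₂
    hU hcrit
  have h3B := no_third_full hdisj.symm hA hb₁ hb₂ ha₁ ha₂ hbb haa hfb₁ hfb₂
    hfa₁ hfa₂ hU' hcrit
  have hEF := edge_full hdisj hU ha₁ ha₂ hb₁ hb₂ haa hbb hfa₁ hfa₂ hfb₁ hfb₂ hcrit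
  have hEF' : ∀ u v, G.Adj u v → u ∈ B → v ∈ A →
      (∀ a ∈ A, G.Adj u a) ∨ (∀ b ∈ B, G.Adj v b) :=
    fun u v h hu hv => Or.symm (hEF v u h.symm hv hu)
  obtain ⟨hn1, hd1⟩ := side_conditions hdisj hcross ha₁ ha₂ hb₁ hb₂ haa hbb
    hfa₁ hfa₂ hfb₁ hfb₂ h3A h3B hEF
  obtain ⟨hn2, hd2⟩ := side_conditions hdisj.symm hcross' hb₁ hb₂ ha₁ ha₂ hbb haa
    hfb₁ hfb₂ hfa₁ hfa₂ h3B h3A hEF'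
  exact Or.inr ⟨A, B, hdisj, hU, hA, hB, hcross, hn1, hd1, hn2, hd2⟩

end BigCase

section FamBLeft

variable {V : Type*} {G : SimpleGraph V}

lemma not_wins1_sides [Finite V] [Nonempty V] {A B : Set V} (hdisj : Disjoint A B)
    (hU : A ∪ B = Set.univ)
    (hcross : ∀ u v, G.Adj u v → (u ∈ A ∧ v ∈ B) ∨ (u ∈ B ∧ v ∈ A))
    (hA : 2 ≤ A.ncard) (hB : 2 ≤ B.ncard) : ¬ WinsWithin1 G := by
  have hcross' : ∀ u v, G.Adj u v → (u ∈ B ∧ v ∈ A) ∨ (u ∈ A ∧ v ∈ B) :=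
    fun u v h => Or.symm (hcross u v h)
  refine not_wins1_of (fun x => ?_)
  have hx : x ∈ A ∪ B := by rw [hU]; trivial
  rcases hx with hx | hx
  · obtain ⟨z, hzA, hz⟩ := exists_mem_ne hA x
    exact ⟨z, hz, not_adj_same hdisj hcross hx hzA⟩
  · obtain ⟨z, hzB, hz⟩ := exists_mem_ne hB x
    exact ⟨z, hz, not_adj_same hdisj.symm hcross' hx hzB⟩

lemma famB_crit_core [Finite V] {A B : Set V} {a₁ a₂ : V} (hdisj : Disjoint A B)
    (hU : A ∪ B = Set.univ)
    (hcross : ∀ u v, G.Adj u v → (u ∈ A ∧ v ∈ B) ∨ (u ∈ B ∧ v ∈ A))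
    (hA : 3 ≤ A.ncard) (hB : 3 ≤ B.ncard)
    (hthree : ∀ x ∈ A, (∀ b ∈ B, G.Adj x b) → x = a₁ ∨ x = a₂)
    {u v : V} (hu : u ∈ A) (hv : v ∈ B) (hufull : ∀ b ∈ B, G.Adj u b) :
    ¬ WinsWithin2 (G.deleteEdges {s(u, v)}) := by
  intro hW
  have toG : ∀ {p q : V}, (G.deleteEdges {s(u, v)}).Adj p q → G.Adj p q :=
    fun h => (SimpleGraph.deleteEdges_adj.mp h).1
  obtain ⟨f₁, f₂, hf₁, hf₂, hff, hfful₁, hfful₂⟩ :=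
    fulls_of_wins2 hdisj hU (fun p q h => hcross p q (toG h)) hA hB hW
  have hne₁ : f₁ ≠ u := by
    rintro rfl
    have := hfful₁ v hv
    rw [SimpleGraph.deleteEdges_adj] at this
    simp at this
  have hne₂ : f₂ ≠ u := by
    rintro rfl
    have := hfful₂ v hv
    rw [SimpleGraph.deleteEdges_adj] at this
    simp at this
  have h1 : f₁ = a₁ ∨ f₁ = a₂ := hthree f₁ hf₁ (fun b hb => toG (hfful₁ b hb))
  have h2 : f₂ = a₁ ∨ f₂ = a₂ := hthree f₂ hf₂ (fun b hb => toG (hfful₂ b hb))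
  have hu' : u = a₁ ∨ u = a₂ := hthree u hu hufull
  rcases hu' with hu' | hu' <;> rcases h1 with h1 | h1 <;> rcases h2 with h2 | h2 <;>
    first
      | exact hne₁ (h1.trans hu'.symm)
      | exact hne₂ (h2.trans hu'.symm)
      | exact hff (h1.trans h2.symm)

lemma famB_gives_critical [Finite V] {A B : Set V} (hdisj : Disjoint A B)
    (hU : A ∪ B = Set.univ) (hA : 3 ≤ A.ncard) (hB : 3 ≤ B.ncard)
    (hcross : ∀ u v, G.Adj u v → (u ∈ A ∧ v ∈ B) ∨ (u ∈ B ∧ v ∈ A))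
    (hFA2 : {v ∈ A | (G.neighborSet v).ncard = B.ncard}.ncard = 2)
    (hdegA : ∀ v ∈ A, (G.neighborSet v).ncard = B.ncard ∨ (G.neighborSet v).ncard = 2)
    (hFB2 : {v ∈ B | (G.neighborSet v).ncard = A.ncard}.ncard = 2)
    (hdegB : ∀ v ∈ B, (G.neighborSet v).ncard = A.ncard ∨ (G.neighborSet v).ncard = 2) :
    Critical2 G := by
  have hcross' : ∀ u v, G.Adj u v → (u ∈ B ∧ v ∈ A) ∨ (u ∈ A ∧ v ∈ B) :=
    fun u v h => Or.symm (hcross u v h)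
  have hU' : B ∪ A = Set.univ := by rw [Set.union_comm]; exact hU
  have hAne : A.Nonempty := Set.nonempty_of_ncard_ne_zero (by omega)
  have : Nonempty V := ⟨hAne.choose⟩
  obtain ⟨a₁, a₂, haa, hsetA⟩ := Set.ncard_eq_two.mp hFA2
  obtain ⟨b₁, b₂, hbb, hsetB⟩ := Set.ncard_eq_two.mp hFB2
  have ha₁' : a₁ ∈ {v ∈ A | (G.neighborSet v).ncard = B.ncard} := by rw [hsetA]; simp
  have ha₂' : a₂ ∈ {v ∈ A | (G.neighborSet v).ncard = B.ncard} := by rw [hsetA]; simp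
  have hb₁' : b₁ ∈ {v ∈ B | (G.neighborSet v).ncard = A.ncard} := by rw [hsetB]; simp
  have hb₂' : b₂ ∈ {v ∈ B | (G.neighborSet v).ncard = A.ncard} := by rw [hsetB]; simp
  obtain ⟨ha₁, ha₁n⟩ := ha₁'
  obtain ⟨ha₂, ha₂n⟩ := ha₂'
  obtain ⟨hb₁, hb₁n⟩ := hb₁'
  obtain ⟨hb₂, hb₂n⟩ := hb₂'
  have hfa₁ : ∀ b ∈ B, G.Adj a₁ b := (full_iff_ncard hdisj hcross ha₁).mpr ha₁n
  have hfa₂ : ∀ b ∈ B, G.Adj a₂ b := (full_iff_ncard hdisj hcross ha₂).mpr ha₂n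
  have hfb₁ : ∀ a ∈ A, G.Adj b₁ a := (full_iff_ncard hdisj.symm hcross' hb₁).mpr hb₁n
  have hfb₂ : ∀ a ∈ A, G.Adj b₂ a := (full_iff_ncard hdisj.symm hcross' hb₂).mpr hb₂n
  have hthreeA : ∀ x ∈ A, (∀ b ∈ B, G.Adj x b) → x = a₁ ∨ x = a₂ := by
    intro x hx hxf
    have : x ∈ {v ∈ A | (G.neighborSet v).ncard = B.ncard} :=
      ⟨hx, (full_iff_ncard hdisj hcross hx).mp hxf⟩
    rw [hsetA] at this
    simpa using this
  have hthreeB : ∀ y ∈ B, (∀ a ∈ A, G.Adj y a) → y = b₁ ∨ y = b₂ := by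
    intro y hy hyf
    have : y ∈ {v ∈ B | (G.neighborSet v).ncard = A.ncard} :=
      ⟨hy, (full_iff_ncard hdisj.symm hcross' hy).mp hyf⟩
    rw [hsetB] at this
    simpa using this
  refine ⟨⟨wins2_of_fulls hdisj hU ha₁ ha₂ hb₁ hb₂ haa hbb hfa₁ hfa₂ hfb₁ hfb₂,
    not_wins1_sides hdisj hU hcross (by omega) (by omega)⟩, ?_⟩
  intro u v hadj
  have hfull_or : ∀ p q, G.Adj p q → p ∈ A → q ∈ B →
      (∀ b ∈ B, G.Adj p b) ∨ (∀ a ∈ A, G.Adj q a) := by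
    intro p q hpq hp hq
    by_cases hf : (G.neighborSet p).ncard = B.ncard
    · exact Or.inl ((full_iff_ncard hdisj hcross hp).mpr hf)
    · right
      have hdeg2 : (G.neighborSet p).ncard = 2 := by
        rcases hdegA p hp with h | h
        · exact absurd h hf
        · exact h
      have hsub : ({b₁, b₂} : Set V) ⊆ G.neighborSet p := by
        intro w hw
        simp only [Set.mem_insert_iff, Set.mem_singleton_iff] at hw
        rw [SimpleGraph.mem_neighborSet]
        rcases hw with rfl | rfl
        · exact (hfb₁ p hp).symm
        · exact (hfb₂ p hp).symm
      have heq : ({b₁, b₂} : Set V) = G.neighborSet p :=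
        Set.eq_of_subset_of_ncard_le hsub
          (by rw [hdeg2, Set.ncard_pair hbb]) (Set.toFinite _)
      have hqmem : q ∈ ({b₁, b₂} : Set V) := by
        rw [heq, SimpleGraph.mem_neighborSet]
        exact hpq
      simp only [Set.mem_insert_iff, Set.mem_singleton_iff] at hqmem
      rcases hqmem with rfl | rfl
      · exact hfb₁
      · exact hfb₂
  rcases hcross u v hadj with ⟨hu, hv⟩ | ⟨hu, hv⟩
  · rcases hfull_or u v hadj hu hv with hf | hf
    · exact famB_crit_core hdisj hU hcross hA hB hthreeA hu hv hf
    · have : s(u, v) = s(v, u) := Sym2.eq_swap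
      rw [this]
      exact famB_crit_core hdisj.symm hU' hcross' hB hA hthreeB hv hu hf
  · rcases hfull_or v u hadj.symm hv hu with hf | hf
    · have : s(u, v) = s(v, u) := Sym2.eq_swap
      rw [this]
      exact famB_crit_core hdisj hU hcross hA hB hthreeA hv hu hf
    · exact famB_crit_core hdisj.symm hU' hcross' hB hA hthreeB hu hv hf

end FamBLeft

section K2M

variable {V : Type*} {G : SimpleGraph V}

lemma k2_crit_core [Finite V] {A B : Set V} {x₁ x₂ : V} (hdisj : Disjoint A B)
    (hU : A ∪ B = Set.univ)
    (hcross : ∀ u v, G.Adj u v → (u ∈ A ∧ v ∈ B) ∨ (u ∈ B ∧ v ∈ A))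
    (hAeq : A = {x₁, x₂}) (hxx : x₁ ≠ x₂) (hB : 3 ≤ B.ncard)
    {u v : V} (hu : u ∈ A) (hv : v ∈ B) :
    ¬ WinsWithin2 (G.deleteEdges {s(u, v)}) := by
  have toG : ∀ {p q : V}, (G.deleteEdges {s(u, v)}).Adj p q → G.Adj p q :=
    fun h => (SimpleGraph.deleteEdges_adj.mp h).1
  have hu2 : u = x₁ ∨ u = x₂ := by rw [hAeq] at hu; simpa using hu
  obtain ⟨x', hux', hA'⟩ : ∃ x', u ≠ x' ∧ A = {u, x'} := by
    rcases hu2 with h | h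
    · subst h
      exact ⟨x₂, hxx, hAeq⟩
    · subst h
      exact ⟨x₁, hxx.symm, hAeq.trans (Set.pair_comm x₁ u)⟩
  have hx'A : x' ∈ A := by rw [hA']; simp
  have huA : u ∈ A := hu
  have hside : ∀ w : V, w ∈ A ∨ w ∈ B := by
    intro w
    have : w ∈ A ∪ B := by rw [hU]; trivial
    exact this
  have huv : u ≠ v := mem_ne_of_disjoint hdisj huA hv
  intro hW
  have hclaim : ∀ d₁ d₂ : V, d₁ ≠ x' → d₂ ≠ x' → d₂ ≠ d₁ →
      Dominating (G.deleteEdges {s(u, v)}) {d₁, d₂} →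
      (u = d₁ ∨ u = d₂) ∧ (v = d₁ ∨ v = d₂) := by
    intro d₁ d₂ h1s h2s h2d hdom
    have hud : u = d₁ ∨ u = d₂ := by
      by_contra hcon
      push_neg at hcon
      obtain ⟨hud₁, hud₂⟩ := hcon
      obtain ⟨b₃, hb₃B, h31, h32⟩ := exists_mem_ne_ne hB d₁ d₂
      have hb₃mem : b₃ ∉ ({d₁, d₂} : Set V) := by
        simp only [Set.mem_insert_iff, Set.mem_singleton_iff, not_or]
        exact ⟨h31, h32⟩
      obtain ⟨d, hd, hadj⟩ := hdom b₃ hb₃mem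
      simp only [Set.mem_insert_iff, Set.mem_singleton_iff] at hd
      have hdA : d ∈ A := by
        rcases hcross d b₃ (toG hadj) with ⟨h, _⟩ | ⟨_, h⟩
        · exact h
        · exact absurd hb₃B (Set.disjoint_left.mp hdisj h)
      have hdux : d = u ∨ d = x' := by rw [hA'] at hdA; simpa using hdA
      rcases hd with rfl | rfl
      · rcases hdux with h | h
        · exact hud₁ h.symm
        · exact h1s h
      · rcases hdux with h | h
        · exact hud₂ h.symm
        · exact h2s h
    have hvd : v = d₁ ∨ v = d₂ := by
      by_contra hcon
      push_neg at hcon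
      obtain ⟨hv₁, hv₂⟩ := hcon
      have hvmem : v ∉ ({d₁, d₂} : Set V) := by
        simp only [Set.mem_insert_iff, Set.mem_singleton_iff, not_or]
        exact ⟨hv₁, hv₂⟩
      obtain ⟨d, hd, hadj⟩ := hdom v hvmem
      simp only [Set.mem_insert_iff, Set.mem_singleton_iff] at hd
      have hdA : d ∈ A := by
        rcases hcross d v (toG hadj) with ⟨h, _⟩ | ⟨_, h⟩
        · exact h
        · exact absurd hv (Set.disjoint_left.mp hdisj h)
      have hdux : d = u ∨ d = x' := by rw [hA'] at hdA; simpa using hdA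
      rcases hdux with rfl | rfl
      · rw [SimpleGraph.deleteEdges_adj] at hadj
        simp at hadj
      · rcases hd with h | h
        · exact h1s h.symm
        · exact h2s h.symm
    exact ⟨hud, hvd⟩
  refine not_wins2_of_bound x' (fun s d => ?_) (fun d₁ hne => ?_) hW
  · obtain ⟨z, _, h1, h2⟩ := exists_mem_ne_ne hB s d
    exact ⟨z, h1, h2⟩
  constructor
  · rcases hside d₁ with hd₁ | hd₁
    · have : d₁ = u ∨ d₁ = x' := by rw [hA'] at hd₁; simpa using hd₁
      rcases this with rfl | rfl
      · exact not_dom_single (Ne.symm hux')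
          (fun h => not_adj_same hdisj hcross huA hx'A (toG h))
      · exact absurd rfl hne
    · obtain ⟨z, hzB, hz⟩ := exists_mem_ne (S := B) (by omega) d₁
      exact not_dom_single hz
        (fun h => not_adj_same hdisj.symm
          (fun p q hh => Or.symm (hcross p q hh)) hd₁ hzB (toG h))
  · by_cases hd₁u : d₁ = u
    · refine ⟨v, fun d₂ h2s h2d hdom => ?_⟩
      obtain ⟨_, hvd⟩ := hclaim d₁ d₂ hne h2s h2d hdom
      rcases hvd with h | h
      · exact absurd (h.trans hd₁u) huv.symm
      · exact h.symm
    · refine ⟨u, fun d₂ h2s h2d hdom => ?_⟩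
      obtain ⟨hud, _⟩ := hclaim d₁ d₂ hne h2s h2d hdom
      rcases hud with h | h
      · exact absurd h.symm hd₁u
      · exact h.symm

lemma k2m_gives_critical [Finite V] {m : ℕ} (hm : 3 ≤ m)
    (e : G ≃g completeBipartiteGraph (Fin 2) (Fin m)) : Critical2 G := by
  set A : Set V := {v | (e v).isLeft = true} with hAdef
  set B : Set V := {v | (e v).isRight = true} with hBdef
  have hdisj : Disjoint A B := by
    rw [Set.disjoint_left]
    intro v hvA hvB
    simp only [hAdef, hBdef, Set.mem_setOf_eq] at hvA hvB
    cases h : (e v) <;> rw [h] at hvA hvB <;> simp_all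
  have hU : A ∪ B = Set.univ := by
    ext v
    simp only [hAdef, hBdef, Set.mem_union, Set.mem_setOf_eq, Set.mem_univ, iff_true]
    cases h : (e v) <;> simp
  have hadj_iff : ∀ p q : V, G.Adj p q ↔
      ((e p).isLeft = true ∧ (e q).isRight = true ∨
        (e p).isRight = true ∧ (e q).isLeft = true) := by
    intro p q
    rw [← e.map_rel_iff]
    rw [completeBipartiteGraph_adj]
  have hcross : ∀ u v, G.Adj u v → (u ∈ A ∧ v ∈ B) ∨ (u ∈ B ∧ v ∈ A) := by
    intro u v h
    rw [hadj_iff] at h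
    exact h
  have hcomp : ∀ x ∈ A, ∀ y ∈ B, G.Adj x y := by
    intro x hx y hy
    rw [hadj_iff]
    exact Or.inl ⟨hx, hy⟩
  set x₁ : V := e.symm (Sum.inl 0) with hx₁def
  set x₂ : V := e.symm (Sum.inl 1) with hx₂def
  have hex₁ : e x₁ = Sum.inl 0 := e.apply_symm_apply _
  have hex₂ : e x₂ = Sum.inl 1 := e.apply_symm_apply _
  have hxx : x₁ ≠ x₂ := by
    intro h
    have := congrArg e h
    rw [hex₁, hex₂] at this
    simp at this
  have hx₁A : x₁ ∈ A := by simp [hAdef, hex₁]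
  have hx₂A : x₂ ∈ A := by simp [hAdef, hex₂]
  have hfin2 : ∀ i : Fin 2, i = 0 ∨ i = 1 := by decide
  have hAeq : A = {x₁, x₂} := by
    ext v
    simp only [hAdef, Set.mem_setOf_eq, Set.mem_insert_iff, Set.mem_singleton_iff]
    constructor
    · intro hv
      cases h : (e v) with
      | inl i =>
        rcases hfin2 i with rfl | rfl
        · left
          have : v = e.symm (e v) := (e.symm_apply_apply v).symm
          rw [this, h, hx₁def]
        · right
          have : v = e.symm (e v) := (e.symm_apply_apply v).symm
          rw [this, h, hx₂def]
      | inr i => rw [h] at hv; simp at hv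
    · rintro (rfl | rfl)
      · rw [hex₁]; rfl
      · rw [hex₂]; rfl
  set i0 : Fin m := ⟨0, by omega⟩ with hi0
  set i1 : Fin m := ⟨1, by omega⟩ with hi1
  set i2 : Fin m := ⟨2, by omega⟩ with hi2
  set y₁ : V := e.symm (Sum.inr i0) with hy₁def
  set y₂ : V := e.symm (Sum.inr i1) with hy₂def
  set y₃ : V := e.symm (Sum.inr i2) with hy₃def
  have hey : ∀ i : Fin m, e (e.symm (Sum.inr i)) = Sum.inr i := fun i => e.apply_symm_apply _
  have hyB : ∀ i : Fin m, e.symm (Sum.inr i) ∈ B := by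
    intro i
    simp [hBdef, hey i]
  have hy₁B : y₁ ∈ B := hyB _
  have hy₂B : y₂ ∈ B := hyB _
  have hy₃B : y₃ ∈ B := hyB _
  have hyne : ∀ i j : Fin m, i ≠ j → e.symm (Sum.inr i) ≠ e.symm (Sum.inr j) := by
    intro i j hij h
    have := congrArg e h
    rw [hey, hey] at this
    simp at this
    exact hij this
  have h01 : i0 ≠ i1 := by simp [hi0, hi1, Fin.ext_iff]
  have h02 : i0 ≠ i2 := by simp [hi0, hi2, Fin.ext_iff]
  have h12 : i1 ≠ i2 := by simp [hi1, hi2, Fin.ext_iff]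
  have hB3 : 3 ≤ B.ncard :=
    three_le_ncard hy₁B hy₂B hy₃B (hyne _ _ h01) (hyne _ _ h02) (hyne _ _ h12)
  have hfullx : ∀ x ∈ A, ∀ b ∈ B, G.Adj x b := hcomp
  have hfully : ∀ y ∈ B, ∀ a ∈ A, G.Adj y a := fun y hy a ha => (hcomp a ha y hy).symm
  have hA2 : A.ncard = 2 := by rw [hAeq]; exact Set.ncard_pair hxx
  haveI : Nonempty V := ⟨x₁⟩
  refine ⟨⟨?_, ?_⟩, ?_⟩
  · exact wins2_of_fulls hdisj hU hx₁A hx₂A hy₁B hy₂B hxx (hyne _ _ h01)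
      (fun b hb => hcomp x₁ hx₁A b hb) (fun b hb => hcomp x₂ hx₂A b hb)
      (fun a ha => hfully y₁ hy₁B a ha) (fun a ha => hfully y₂ hy₂B a ha)
  · exact not_wins1_sides hdisj hU hcross (by omega) (by omega)
  · intro u v hadj
    rcases hcross u v hadj with ⟨hu, hv⟩ | ⟨hu, hv⟩
    · exact k2_crit_core hdisj hU hcross hAeq hxx hB3 hu hv
    · have hsw : s(u, v) = s(v, u) := Sym2.eq_swap
      rw [hsw]
      exact k2_crit_core hdisj hU hcross hAeq hxx hB3 hv hu

end K2M

section TwoSide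

variable {V : Type*} {G : SimpleGraph V}

lemma complete_of_wins2_core [Finite V] {A B : Set V} {x₁ x₂ : V}
    (hdisj : Disjoint A B) (hU : A ∪ B = Set.univ)
    (hcross : ∀ u v, G.Adj u v → (u ∈ A ∧ v ∈ B) ∨ (u ∈ B ∧ v ∈ A))
    (hAeq : A = {x₁, x₂}) (hxx : x₁ ≠ x₂) (hB : 3 ≤ B.ncard)
    (hw2 : WinsWithin2 G) : ∀ y ∈ B, G.Adj x₂ y := by
  have hcross' : ∀ u v, G.Adj u v → (u ∈ B ∧ v ∈ A) ∨ (u ∈ A ∧ v ∈ B) :=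
    fun u v h => Or.symm (hcross u v h)
  have hx₁A : x₁ ∈ A := by rw [hAeq]; simp
  have hx₂A : x₂ ∈ A := by rw [hAeq]; simp
  have hside : ∀ w : V, w ∈ A ∨ w ∈ B := by
    intro w
    have : w ∈ A ∪ B := by rw [hU]; trivial
    exact this
  by_contra hcon
  push_neg at hcon
  obtain ⟨y₀, hy₀B, hy₀na⟩ := hcon
  refine not_wins2_of_bound x₁ (fun s d => ?_) (fun d₁ hne => ?_) hw2
  · obtain ⟨z, _, h1, h2⟩ := exists_mem_ne_ne hB s d
    exact ⟨z, h1, h2⟩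
  constructor
  · rcases hside d₁ with hd₁ | hd₁
    · have : d₁ = x₁ ∨ d₁ = x₂ := by rw [hAeq] at hd₁; simpa using hd₁
      rcases this with rfl | rfl
      · exact absurd rfl hne
      · exact not_dom_single hxx (not_adj_same hdisj hcross hx₂A hx₁A)
    · obtain ⟨z, hzB, hz⟩ := exists_mem_ne (S := B) (by omega) d₁
      exact not_dom_single hz (not_adj_same hdisj.symm hcross' hd₁ hzB)
  · rcases hside d₁ with hd₁ | hd₁
    · have hd₁x : d₁ = x₁ ∨ d₁ = x₂ := by rw [hAeq] at hd₁; simpa using hd₁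
      have hd₁2 : d₁ = x₂ := by
        rcases hd₁x with h | h
        · exact absurd h hne
        · exact h
      refine ⟨y₀, fun d₂ h2s h2d hdom => ?_⟩
      by_cases hq : d₂ = y₀
      · exact hq
      exfalso
      have hymem : y₀ ∉ ({d₁, d₂} : Set V) := by
        simp only [Set.mem_insert_iff, Set.mem_singleton_iff, not_or]
        exact ⟨Ne.symm (mem_ne_of_disjoint hdisj hd₁ hy₀B), fun h => hq h.symm⟩
      obtain ⟨d, hd, hadj⟩ := hdom y₀ hymem
      simp only [Set.mem_insert_iff, Set.mem_singleton_iff] at hd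
      rcases hd with h | h
      · rw [h, hd₁2] at hadj
        exact hy₀na hadj
      · rw [h] at hadj
        rcases hside d₂ with hd₂ | hd₂
        · have : d₂ = x₁ ∨ d₂ = x₂ := by rw [hAeq] at hd₂; simpa using hd₂
          rcases this with h' | h'
          · exact h2s h'
          · exact h2d (h'.trans hd₁2.symm)
        · exact not_adj_same hdisj.symm hcross' hd₂ hy₀B hadj
    · refine ⟨x₂, fun d₂ h2s h2d hdom => ?_⟩
      rcases hside d₂ with hd₂ | hd₂
      · have : d₂ = x₁ ∨ d₂ = x₂ := by rw [hAeq] at hd₂; simpa using hd₂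
        rcases this with h | h
        · exact absurd h h2s
        · exact h
      · exfalso
        obtain ⟨b₃, hb₃B, h31, h32⟩ := exists_mem_ne_ne hB d₁ d₂
        have hbmem : b₃ ∉ ({d₁, d₂} : Set V) := by
          simp only [Set.mem_insert_iff, Set.mem_singleton_iff, not_or]
          exact ⟨h31, h32⟩
        obtain ⟨d, hd, hadj⟩ := hdom b₃ hbmem
        simp only [Set.mem_insert_iff, Set.mem_singleton_iff] at hd
        rcases hd with rfl | rfl
        · exact not_adj_same hdisj.symm hcross' hd₁ hb₃B hadj
        · exact not_adj_same hdisj.symm hcross' hd₂ hb₃B hadj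

lemma complete_of_wins2 [Finite V] {A B : Set V}
    (hdisj : Disjoint A B) (hU : A ∪ B = Set.univ)
    (hcross : ∀ u v, G.Adj u v → (u ∈ A ∧ v ∈ B) ∨ (u ∈ B ∧ v ∈ A))
    (hA : A.ncard = 2) (hB : 3 ≤ B.ncard)
    (hw2 : WinsWithin2 G) : ∀ x ∈ A, ∀ y ∈ B, G.Adj x y := by
  obtain ⟨x₁, x₂, hxx, hAeq⟩ := Set.ncard_eq_two.mp hA
  have h2 := complete_of_wins2_core hdisj hU hcross hAeq hxx hB hw2
  have h1 := complete_of_wins2_core hdisj hU hcross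
    (hAeq.trans (Set.pair_comm x₁ x₂)) hxx.symm hB hw2
  intro x hx y hy
  have : x = x₁ ∨ x = x₂ := by rw [hAeq] at hx; simpa using hx
  rcases this with rfl | rfl
  · exact h1 y hy
  · exact h2 y hy

lemma iso_K2m [Fintype V] {A B : Set V}
    (hdisj : Disjoint A B) (hU : A ∪ B = Set.univ)
    (hcross : ∀ u v, G.Adj u v → (u ∈ A ∧ v ∈ B) ∨ (u ∈ B ∧ v ∈ A))
    (hA : A.ncard = 2)
    (hcomp : ∀ x ∈ A, ∀ y ∈ B, G.Adj x y) :
    Nonempty (G ≃g completeBipartiteGraph (Fin 2) (Fin (B.ncard))) := by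
  classical
  have hBA : B = Aᶜ := by
    ext v
    constructor
    · intro hv
      exact Set.disjoint_right.mp hdisj hv
    · intro hv
      have : v ∈ A ∪ B := by rw [hU]; trivial
      rcases this with h | h
      · exact absurd h hv
      · exact h
  have hcardA : Fintype.card ↥A = 2 := by
    rw [← Nat.card_eq_fintype_card, Nat.card_coe_set_eq, hA]
  have hcardB : Fintype.card ↥(Aᶜ : Set V) = B.ncard := by
    rw [← Nat.card_eq_fintype_card, Nat.card_coe_set_eq, ← hBA]
  let eA : ↥A ≃ Fin 2 := Fintype.equivFinOfCardEq hcardA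
  let eB : ↥(Aᶜ : Set V) ≃ Fin (B.ncard) := Fintype.equivFinOfCardEq hcardB
  let f : V ≃ (Fin 2) ⊕ (Fin (B.ncard)) :=
    (Equiv.Set.sumCompl A).symm.trans (Equiv.sumCongr eA eB)
  have hfmem : ∀ (x : V) (hx : x ∈ A), f x = Sum.inl (eA ⟨x, hx⟩) := by
    intro x hx
    simp [f, Equiv.Set.sumCompl_symm_apply_of_mem hx]
  have hfnot : ∀ (x : V) (hx : x ∉ A), f x = Sum.inr (eB ⟨x, hx⟩) := by
    intro x hx
    simp [f, Equiv.Set.sumCompl_symm_apply_of_notMem hx]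
  have hmemB : ∀ x : V, x ∉ A → x ∈ B := by
    intro x hx
    rw [hBA]
    exact hx
  refine ⟨⟨f, ?_⟩⟩
  intro p q
  show (completeBipartiteGraph (Fin 2) (Fin (B.ncard))).Adj (f p) (f q) ↔ G.Adj p q
  rw [completeBipartiteGraph_adj]
  by_cases hp : p ∈ A <;> by_cases hq : q ∈ A
  · rw [hfmem p hp, hfmem q hq]
    simp only [Sum.isLeft_inl, Sum.isRight_inl]
    constructor
    · rintro (⟨_, h⟩ | ⟨h, _⟩) <;> exact absurd h (by simp)
    · intro h
      exact absurd h (not_adj_same hdisj hcross hp hq)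
  · rw [hfmem p hp, hfnot q hq]
    simp only [Sum.isLeft_inl, Sum.isRight_inr, Sum.isRight_inl, Sum.isLeft_inr]
    constructor
    · intro _
      exact hcomp p hp q (hmemB q hq)
    · intro _
      simp
  · rw [hfnot p hp, hfmem q hq]
    simp only [Sum.isLeft_inl, Sum.isRight_inr, Sum.isRight_inl, Sum.isLeft_inr]
    constructor
    · intro _
      exact (hcomp q hq p (hmemB p hp)).symm
    · intro _
      simp
  · rw [hfnot p hp, hfnot q hq]
    simp only [Sum.isLeft_inr, Sum.isRight_inr]
    constructor
    · rintro (⟨h, _⟩ | ⟨_, h⟩) <;> exact absurd h (by simp)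
    · intro h
      exact absurd h (not_adj_same hdisj.symm
        (fun u v hh => Or.symm (hcross u v hh)) (hmemB p hp) (hmemB q hq))

end TwoSide

section SmallCases

variable {V : Type*} {G : SimpleGraph V}

lemma walk_closed {S : Set V} (hS : ∀ a ∈ S, ∀ b, G.Adj a b → b ∈ S)
    {u v : V} (w : G.Walk u v) (hu : u ∈ S) : v ∈ S := by
  induction w with
  | nil => exact hu
  | @cons a b c h p ih => exact ih (hS _ hu _ h)

lemma exists_adj_of_conn (hconn : G.Connected) (hV2 : ∃ p q : V, p ≠ q) (w : V) :
    ∃ z, G.Adj w z := by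
  obtain ⟨p, q, hpq⟩ := hV2
  have ht : ∃ t, t ≠ w := by
    rcases eq_or_ne p w with h | h
    · exact ⟨q, by rw [← h]; exact hpq.symm⟩
    · exact ⟨p, h⟩
  obtain ⟨t, ht⟩ := ht
  obtain ⟨wk⟩ := hconn.preconnected w t
  cases wk with
  | nil => exact absurd rfl ht.symm
  | cons h _ => exact ⟨_, h⟩

lemma small_side_contra [Finite V] {A B : Set V} (hconn : G.Connected)
    (hdisj : Disjoint A B) (hU : A ∪ B = Set.univ)
    (hcross : ∀ u v, G.Adj u v → (u ∈ A ∧ v ∈ B) ∨ (u ∈ B ∧ v ∈ A))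
    (hA : A.ncard ≤ 1) (hw2 : WinsWithin2 G) (hnw1 : ¬ WinsWithin1 G) : False := by
  have hcross' : ∀ u v, G.Adj u v → (u ∈ B ∧ v ∈ A) ∨ (u ∈ A ∧ v ∈ B) :=
    fun u v h => Or.symm (hcross u v h)
  have hV : Nonempty V := hconn.nonempty
  have hV2 : ∃ p q : V, p ≠ q := by
    by_contra hs
    push_neg at hs
    obtain ⟨d₁, hne, _⟩ := hw2 (Classical.arbitrary V)
    exact hne (hs _ _)
  have hside : ∀ w : V, w ∈ A ∨ w ∈ B := by
    intro w
    have : w ∈ A ∪ B := by rw [hU]; trivial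
    exact this
  rcases Nat.le_one_iff_eq_zero_or_eq_one.mp hA with hA0 | hA1
  · -- A empty, no edges, contradiction with connectivity
    have hAe : A = ∅ := (Set.ncard_eq_zero (Set.toFinite _)).mp hA0
    have hno : ∀ p q : V, ¬ G.Adj p q := by
      intro p q h
      rcases hcross p q h with ⟨h1, _⟩ | ⟨_, h1⟩ <;> rw [hAe] at h1 <;> exact h1
    obtain ⟨p, q, hpq⟩ := hV2
    obtain ⟨wk⟩ := hconn.preconnected p q
    cases wk with
    | nil => exact hpq rfl
    | cons h _ => exact hno _ _ h
  · obtain ⟨x, hAx⟩ := Set.ncard_eq_one.mp hA1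
    have hxA : x ∈ A := by rw [hAx]; rfl
    have hmemB : ∀ w : V, w ≠ x → w ∈ B := by
      intro w hw
      rcases hside w with h | h
      · rw [hAx] at h
        exact absurd h hw
      · exact h
    by_cases hB2 : 2 ≤ B.ncard
    · -- star with at least two leaves : not WinsWithin2
      obtain ⟨z₁, hz₁B, _⟩ := exists_mem_ne hB2 x
      obtain ⟨z₂, hz₂B, hz₂z₁⟩ := exists_mem_ne hB2 z₁
      have hxz₁ : x ≠ z₁ := mem_ne_of_disjoint hdisj hxA hz₁B
      have hxz₂ : x ≠ z₂ := mem_ne_of_disjoint hdisj hxA hz₂B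
      refine not_wins2_of_bound x (fun s d => pick_of_three hxz₁ hxz₂ hz₂z₁.symm s d)
        (fun d₁ hne => ?_) hw2
      have hd₁B : d₁ ∈ B := hmemB d₁ hne
      constructor
      · obtain ⟨z, hzB, hz⟩ := exists_mem_ne hB2 d₁
        exact not_dom_single hz (not_adj_same hdisj.symm hcross' hd₁B hzB)
      · by_cases hB3 : 3 ≤ B.ncard
        · refine ⟨x, fun d₂ h2s h2d hdom => ?_⟩
          exfalso
          have hd₂B : d₂ ∈ B := hmemB d₂ h2s
          obtain ⟨b₃, hb₃B, h31, h32⟩ := exists_mem_ne_ne hB3 d₁ d₂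
          have hbmem : b₃ ∉ ({d₁, d₂} : Set V) := by
            simp only [Set.mem_insert_iff, Set.mem_singleton_iff, not_or]
            exact ⟨h31, h32⟩
          obtain ⟨d, hd, hadj⟩ := hdom b₃ hbmem
          simp only [Set.mem_insert_iff, Set.mem_singleton_iff] at hd
          rcases hd with rfl | rfl
          · exact not_adj_same hdisj.symm hcross' hd₁B hb₃B hadj
          · exact not_adj_same hdisj.symm hcross' hd₂B hb₃B hadj
        · -- B has exactly two elements
          have hBeq : B.ncard = 2 := by omega
          obtain ⟨w₁, w₂, hww, hBw⟩ := Set.ncard_eq_two.mp hBeq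
          have hmem2 : ∀ w ∈ B, w = w₁ ∨ w = w₂ := by
            intro w hw
            rw [hBw] at hw
            simpa using hw
          by_cases hdw : d₁ = w₁
          · refine ⟨w₂, fun d₂ h2s h2d _ => ?_⟩
            rcases hmem2 d₂ (hmemB d₂ h2s) with h | h
            · exact absurd (h.trans hdw.symm) h2d
            · exact h
          · refine ⟨w₁, fun d₂ h2s h2d _ => ?_⟩
            have hd₁w₂ : d₁ = w₂ := by
              rcases hmem2 d₁ hd₁B with h | h
              · exact absurd h hdw
              · exact h
            rcases hmem2 d₂ (hmemB d₂ h2s) with h | h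
            · exact h
            · exact absurd (h.trans hd₁w₂.symm) h2d
    · -- |V| = 2 : WinsWithin1 holds, contradiction
      obtain ⟨p, q, hpq⟩ := hV2
      have hBne : B.Nonempty := by
        rcases eq_or_ne p x with h | h
        · exact ⟨q, hmemB q (by rw [← h]; exact hpq.symm)⟩
        · exact ⟨p, hmemB p h⟩
      have hB1 : B.ncard = 1 := by
        have := (Set.ncard_pos (Set.toFinite B)).mpr hBne
        omega
      obtain ⟨y, hBy⟩ := Set.ncard_eq_one.mp hB1
      have hyB : y ∈ B := by rw [hBy]; rfl
      have hyx : y ≠ x := (mem_ne_of_disjoint hdisj hxA hyB).symm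
      have hall : ∀ w : V, w = x ∨ w = y := by
        intro w
        rcases hside w with h | h
        · rw [hAx] at h; exact Or.inl h
        · rw [hBy] at h; exact Or.inr h
      have hadj : G.Adj x y := by
        obtain ⟨z, hz⟩ := exists_adj_of_conn hconn ⟨p, q, hpq⟩ x
        rcases hall z with rfl | rfl
        · exact absurd rfl (G.ne_of_adj hz)
        · exact hz
      apply hnw1
      intro s₁
      rcases hall s₁ with rfl | rfl
      · refine ⟨y, hyx, fun v hv => ?_⟩
        rcases hall v with rfl | rfl
        · exact ⟨y, by simp, hadj.symm⟩
        · exact absurd rfl hv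
      · refine ⟨x, hyx.symm, fun v hv => ?_⟩
        rcases hall v with rfl | rfl
        · exact absurd rfl hv
        · exact ⟨x, by simp, hadj⟩

end SmallCases

section TwoTwo

variable {V : Type*} {G : SimpleGraph V}

lemma wins2_22_core {x₁ x₂ p q : V}
    (huniv : ∀ v : V, v = x₁ ∨ v = x₂ ∨ v = p ∨ v = q)
    (hx : x₁ ≠ x₂) (hpq : p ≠ q)
    (hpx₁ : p ≠ x₁) (hpx₂ : p ≠ x₂) (hqx₁ : q ≠ x₁) (hqx₂ : q ≠ x₂)
    (hp : G.Adj x₁ p) (hq : G.Adj x₂ q) :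
    ∃ d₁, d₁ ≠ x₁ ∧ (Dominating G {d₁} ∨ ∀ s₂, s₂ ∉ ({x₁, d₁} : Set V) →
      ∃ d₂, d₂ ∉ ({x₁, d₁, s₂} : Set V) ∧ Dominating G {d₁, d₂}) := by
  have hdom1 : Dominating G {p, q} := by
    intro v hv
    simp only [Set.mem_insert_iff, Set.mem_singleton_iff, not_or] at hv
    rcases huniv v with rfl | rfl | rfl | rfl
    · exact ⟨p, by simp, hp.symm⟩
    · exact ⟨q, by simp, hq.symm⟩
    · exact absurd rfl hv.1
    · exact absurd rfl hv.2
  have hdom2 : Dominating G {p, x₂} := by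
    intro v hv
    simp only [Set.mem_insert_iff, Set.mem_singleton_iff, not_or] at hv
    rcases huniv v with rfl | rfl | rfl | rfl
    · exact ⟨p, by simp, hp.symm⟩
    · exact absurd rfl hv.2
    · exact absurd rfl hv.1
    · exact ⟨x₂, by simp, hq⟩
  refine ⟨p, hpx₁, Or.inr fun s₂ hs₂ => ?_⟩
  by_cases h : s₂ = q
  · refine ⟨x₂, ?_, hdom2⟩
    simp only [Set.mem_insert_iff, Set.mem_singleton_iff, not_or]
    exact ⟨hx.symm, hpx₂.symm, by rw [h]; exact fun hh => hqx₂ hh.symm⟩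
  · refine ⟨q, ?_, hdom1⟩
    simp only [Set.mem_insert_iff, Set.mem_singleton_iff, not_or]
    exact ⟨hqx₁, hpq.symm, fun hh => h hh.symm⟩

lemma find_pq {x₁ x₂ y₁ y₂ : V}
    (hn1 : G.Adj x₁ y₁ ∨ G.Adj x₁ y₂) (hn2 : G.Adj x₂ y₁ ∨ G.Adj x₂ y₂)
    (hm1 : G.Adj y₁ x₁ ∨ G.Adj y₁ x₂) (hm2 : G.Adj y₂ x₁ ∨ G.Adj y₂ x₂) :
    ∃ p q, ({p, q} : Set V) = {y₁, y₂} ∧ G.Adj x₁ p ∧ G.Adj x₂ q := by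
  rcases hn1 with h1 | h1 <;> rcases hn2 with h2 | h2
  · rcases hm2 with h3 | h3
    · exact ⟨y₂, y₁, Set.pair_comm _ _, h3.symm, h2⟩
    · exact ⟨y₁, y₂, rfl, h1, h3.symm⟩
  · exact ⟨y₁, y₂, rfl, h1, h2⟩
  · exact ⟨y₂, y₁, Set.pair_comm _ _, h1, h2⟩
  · rcases hm1 with h3 | h3
    · exact ⟨y₁, y₂, rfl, h3.symm, h2⟩
    · exact ⟨y₂, y₁, Set.pair_comm _ _, h1, h3.symm⟩

lemma wins2_22_half {u₁ u₂ w₁ w₂ : V}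
    (huniv : ∀ v : V, v = u₁ ∨ v = u₂ ∨ v = w₁ ∨ v = w₂)
    (hu : u₁ ≠ u₂) (hw : w₁ ≠ w₂)
    (h11 : u₁ ≠ w₁) (h12 : u₁ ≠ w₂) (h21 : u₂ ≠ w₁) (h22 : u₂ ≠ w₂)
    (hn1 : G.Adj u₁ w₁ ∨ G.Adj u₁ w₂) (hn2 : G.Adj u₂ w₁ ∨ G.Adj u₂ w₂)
    (hm1 : G.Adj w₁ u₁ ∨ G.Adj w₁ u₂) (hm2 : G.Adj w₂ u₁ ∨ G.Adj w₂ u₂) :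
    ∃ d₁, d₁ ≠ u₁ ∧ (Dominating G {d₁} ∨ ∀ s₂, s₂ ∉ ({u₁, d₁} : Set V) →
      ∃ d₂, d₂ ∉ ({u₁, d₁, s₂} : Set V) ∧ Dominating G {d₁, d₂}) := by
  obtain ⟨p, q, hpqeq, hp, hq⟩ := find_pq hn1 hn2 hm1 hm2
  have hw₁mem : w₁ = p ∨ w₁ = q := by
    have : w₁ ∈ ({p, q} : Set V) := by rw [hpqeq]; simp
    simpa using this
  have hw₂mem : w₂ = p ∨ w₂ = q := by
    have : w₂ ∈ ({p, q} : Set V) := by rw [hpqeq]; simp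
    simpa using this
  have hpmem : p = w₁ ∨ p = w₂ := by
    have : p ∈ ({w₁, w₂} : Set V) := by rw [← hpqeq]; simp
    simpa using this
  have hqmem : q = w₁ ∨ q = w₂ := by
    have : q ∈ ({w₁, w₂} : Set V) := by rw [← hpqeq]; simp
    simpa using this
  have hpq : p ≠ q := by
    intro h
    subst h
    rcases hw₁mem with h1 | h1 <;> rcases hw₂mem with h2 | h2 <;>
      exact hw (h1.trans h2.symm)
  have hpu₁ : p ≠ u₁ := by
    rcases hpmem with h | h <;> subst h
    · exact h11.symm
    · exact h12.symm
  have hpu₂ : p ≠ u₂ := by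
    rcases hpmem with h | h <;> subst h
    · exact h21.symm
    · exact h22.symm
  have hqu₁ : q ≠ u₁ := by
    rcases hqmem with h | h <;> subst h
    · exact h11.symm
    · exact h12.symm
  have hqu₂ : q ≠ u₂ := by
    rcases hqmem with h | h <;> subst h
    · exact h21.symm
    · exact h22.symm
  have huniv' : ∀ v : V, v = u₁ ∨ v = u₂ ∨ v = p ∨ v = q := by
    intro v
    rcases huniv v with h | h | h | h
    · exact Or.inl h
    · exact Or.inr (Or.inl h)
    · subst h
      rcases hw₁mem with h | h
      · exact Or.inr (Or.inr (Or.inl h))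
      · exact Or.inr (Or.inr (Or.inr h))
    · subst h
      rcases hw₂mem with h | h
      · exact Or.inr (Or.inr (Or.inl h))
      · exact Or.inr (Or.inr (Or.inr h))
  exact wins2_22_core huniv' hu hpq hpu₁ hpu₂ hqu₁ hqu₂ hp hq

lemma wins2_22 {A B : Set V} {x₁ x₂ y₁ y₂ : V}
    (hdisj : Disjoint A B) (hU : A ∪ B = Set.univ)
    (hcross : ∀ u v, G.Adj u v → (u ∈ A ∧ v ∈ B) ∨ (u ∈ B ∧ v ∈ A))
    (hAeq : A = {x₁, x₂}) (hBeq : B = {y₁, y₂}) (hx : x₁ ≠ x₂) (hy : y₁ ≠ y₂)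
    (hdeg : ∀ w : V, ∃ z, G.Adj w z) : WinsWithin2 G := by
  have hx₁A : x₁ ∈ A := by rw [hAeq]; simp
  have hx₂A : x₂ ∈ A := by rw [hAeq]; simp
  have hy₁B : y₁ ∈ B := by rw [hBeq]; simp
  have hy₂B : y₂ ∈ B := by rw [hBeq]; simp
  have h11 : x₁ ≠ y₁ := mem_ne_of_disjoint hdisj hx₁A hy₁B
  have h12 : x₁ ≠ y₂ := mem_ne_of_disjoint hdisj hx₁A hy₂B
  have h21 : x₂ ≠ y₁ := mem_ne_of_disjoint hdisj hx₂A hy₁B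
  have h22 : x₂ ≠ y₂ := mem_ne_of_disjoint hdisj hx₂A hy₂B
  have huniv : ∀ v : V, v = x₁ ∨ v = x₂ ∨ v = y₁ ∨ v = y₂ := by
    intro v
    have : v ∈ A ∪ B := by rw [hU]; trivial
    rcases this with h | h
    · rw [hAeq] at h
      rcases h with h | h
      · exact Or.inl h
      · exact Or.inr (Or.inl h)
    · rw [hBeq] at h
      rcases h with h | h
      · exact Or.inr (Or.inr (Or.inl h))
      · exact Or.inr (Or.inr (Or.inr h))
  have hnx : ∀ w, w ∈ A → (G.Adj w y₁ ∨ G.Adj w y₂) := by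
    intro w hw
    obtain ⟨z, hz⟩ := hdeg w
    have hzB : z ∈ B := by
      rcases hcross w z hz with ⟨_, h⟩ | ⟨h, _⟩
      · exact h
      · exact absurd h (Set.disjoint_left.mp hdisj hw)
    rw [hBeq] at hzB
    rcases hzB with h | h
    · exact Or.inl (h ▸ hz)
    · rw [Set.mem_singleton_iff] at h
      exact Or.inr (h ▸ hz)
  have hny : ∀ w, w ∈ B → (G.Adj w x₁ ∨ G.Adj w x₂) := by
    intro w hw
    obtain ⟨z, hz⟩ := hdeg w
    have hzA : z ∈ A := by
      rcases hcross w z hz with ⟨h, _⟩ | ⟨_, h⟩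
      · exact absurd hw (Set.disjoint_left.mp hdisj h)
      · exact h
    rw [hAeq] at hzA
    rcases hzA with h | h
    · exact Or.inl (h ▸ hz)
    · rw [Set.mem_singleton_iff] at h
      exact Or.inr (h ▸ hz)
  have hn1 := hnx x₁ hx₁A
  have hn2 := hnx x₂ hx₂A
  have hm1 := hny y₁ hy₁B
  have hm2 := hny y₂ hy₂B
  intro s₁
  rcases huniv s₁ with rfl | rfl | rfl | rfl
  · exact wins2_22_half huniv hx hy h11 h12 h21 h22 hn1 hn2 hm1 hm2
  · have huniv' : ∀ v : V, v = s₁ ∨ v = x₁ ∨ v = y₁ ∨ v = y₂ := by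
      intro v
      rcases huniv v with h | h | h | h
      · exact Or.inr (Or.inl h)
      · exact Or.inl h
      · exact Or.inr (Or.inr (Or.inl h))
      · exact Or.inr (Or.inr (Or.inr h))
    exact wins2_22_half huniv' hx.symm hy h21 h22 h11 h12 hn2 hn1
      (Or.symm hm1) (Or.symm hm2)
  · have huniv' : ∀ v : V, v = s₁ ∨ v = y₂ ∨ v = x₁ ∨ v = x₂ := by
      intro v
      rcases huniv v with h | h | h | h
      · exact Or.inr (Or.inr (Or.inl h))
      · exact Or.inr (Or.inr (Or.inr h))
      · exact Or.inl h
      · exact Or.inr (Or.inl h)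
    exact wins2_22_half huniv' hy hx h11.symm h21.symm h12.symm h22.symm
      hm1 hm2 hn1 hn2
  · have huniv' : ∀ v : V, v = s₁ ∨ v = y₁ ∨ v = x₁ ∨ v = x₂ := by
      intro v
      rcases huniv v with h | h | h | h
      · exact Or.inr (Or.inr (Or.inl h))
      · exact Or.inr (Or.inr (Or.inr h))
      · exact Or.inr (Or.inl h)
      · exact Or.inl h
    exact wins2_22_half huniv' hy.symm hx h12.symm h22.symm h11.symm h21.symm
      hm2 hm1 (Or.symm hn1) (Or.symm hn2)

lemma twotwo_contra [Finite V] {A B : Set V} (hconn : G.Connected)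
    (hdisj : Disjoint A B) (hU : A ∪ B = Set.univ)
    (hcross : ∀ u v, G.Adj u v → (u ∈ A ∧ v ∈ B) ∨ (u ∈ B ∧ v ∈ A))
    (hA : A.ncard = 2) (hB : B.ncard = 2)
    (hcrit : ∀ u v : V, G.Adj u v → ¬ WinsWithin2 (G.deleteEdges {s(u, v)})) :
    False := by
  obtain ⟨x₁, x₂, hx, hAeq⟩ := Set.ncard_eq_two.mp hA
  obtain ⟨y₁, y₂, hy, hBeq⟩ := Set.ncard_eq_two.mp hB
  have hx₁A : x₁ ∈ A := by rw [hAeq]; simp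
  have hx₂A : x₂ ∈ A := by rw [hAeq]; simp
  have hy₁B : y₁ ∈ B := by rw [hBeq]; simp
  have hy₂B : y₂ ∈ B := by rw [hBeq]; simp
  have h11 : x₁ ≠ y₁ := mem_ne_of_disjoint hdisj hx₁A hy₁B
  have h12 : x₁ ≠ y₂ := mem_ne_of_disjoint hdisj hx₁A hy₂B
  have h21 : x₂ ≠ y₁ := mem_ne_of_disjoint hdisj hx₂A hy₁B
  have h22 : x₂ ≠ y₂ := mem_ne_of_disjoint hdisj hx₂A hy₂B
  have hdeg : ∀ w : V, ∃ z, G.Adj w z := exists_adj_of_conn hconn ⟨x₁, x₂, hx⟩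
  have hmemA : ∀ w ∈ A, w = x₁ ∨ w = x₂ := by
    intro w hw
    rw [hAeq] at hw
    simpa using hw
  have hmemB : ∀ w ∈ B, w = y₁ ∨ w = y₂ := by
    intro w hw
    rw [hBeq] at hw
    simpa using hw
  have hnx : ∀ w, w ∈ A → (G.Adj w y₁ ∨ G.Adj w y₂) := by
    intro w hw
    obtain ⟨z, hz⟩ := hdeg w
    have hzB : z ∈ B := by
      rcases hcross w z hz with ⟨_, h⟩ | ⟨h, _⟩
      · exact h
      · exact absurd h (Set.disjoint_left.mp hdisj hw)
    rcases hmemB z hzB with h | h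
    · exact Or.inl (h ▸ hz)
    · exact Or.inr (h ▸ hz)
  have hny : ∀ w, w ∈ B → (G.Adj w x₁ ∨ G.Adj w x₂) := by
    intro w hw
    obtain ⟨z, hz⟩ := hdeg w
    have hzA : z ∈ A := by
      rcases hcross w z hz with ⟨h, _⟩ | ⟨_, h⟩
      · exact absurd hw (Set.disjoint_left.mp hdisj h)
      · exact h
    rcases hmemA z hzA with h | h
    · exact Or.inl (h ▸ hz)
    · exact Or.inr (h ▸ hz)
  -- find a good edge: u in A adjacent to both of B, v in B adjacent to both of A
  have hgood : ∃ u v, u ∈ A ∧ v ∈ B ∧ (∀ z ∈ B, G.Adj u z) ∧ (∀ z ∈ A, G.Adj v z) := by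
    by_cases hr1 : G.Adj x₁ y₁ ∧ G.Adj x₁ y₂
    · rcases hnx x₂ hx₂A with h | h
      · refine ⟨x₁, y₁, hx₁A, hy₁B, fun z hz => ?_, fun z hz => ?_⟩
        · rcases hmemB z hz with rfl | rfl
          · exact hr1.1
          · exact hr1.2
        · rcases hmemA z hz with rfl | rfl
          · exact hr1.1.symm
          · exact h.symm
      · refine ⟨x₁, y₂, hx₁A, hy₂B, fun z hz => ?_, fun z hz => ?_⟩
        · rcases hmemB z hz with rfl | rfl
          · exact hr1.1
          · exact hr1.2
        · rcases hmemA z hz with rfl | rfl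
          · exact hr1.2.symm
          · exact h.symm
    by_cases hr2 : G.Adj x₂ y₁ ∧ G.Adj x₂ y₂
    · rcases hnx x₁ hx₁A with h | h
      · refine ⟨x₂, y₁, hx₂A, hy₁B, fun z hz => ?_, fun z hz => ?_⟩
        · rcases hmemB z hz with rfl | rfl
          · exact hr2.1
          · exact hr2.2
        · rcases hmemA z hz with rfl | rfl
          · exact h.symm
          · exact hr2.1.symm
      · refine ⟨x₂, y₂, hx₂A, hy₂B, fun z hz => ?_, fun z hz => ?_⟩
        · rcases hmemB z hz with rfl | rfl
          · exact hr2.1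
          · exact hr2.2
        · rcases hmemA z hz with rfl | rfl
          · exact h.symm
          · exact hr2.2.symm
    exfalso
    rcases hnx x₁ hx₁A with ha1 | ha1 <;> rcases hnx x₂ hx₂A with ha2 | ha2
    · -- both adjacent to y₁ only
      have hm1 : ¬ G.Adj x₁ y₂ := fun h => hr1 ⟨ha1, h⟩
      have hm2 : ¬ G.Adj x₂ y₂ := fun h => hr2 ⟨ha2, h⟩
      rcases hny y₂ hy₂B with h | h
      · exact hm1 h.symm
      · exact hm2 h.symm
    · -- x₁ ~ y₁, x₂ ~ y₂ with misses: disconnected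
      have hm1 : ¬ G.Adj x₁ y₂ := fun h => hr1 ⟨ha1, h⟩
      have hm2 : ¬ G.Adj x₂ y₁ := fun h => hr2 ⟨h, ha2⟩
      have hclosed : ∀ a ∈ ({x₁, y₁} : Set V), ∀ b, G.Adj a b → b ∈ ({x₁, y₁} : Set V) := by
        intro a ha b hab
        simp only [Set.mem_insert_iff, Set.mem_singleton_iff] at ha ⊢
        rcases ha with rfl | rfl
        · have hbB : b ∈ B := by
            rcases hcross a b hab with ⟨_, h⟩ | ⟨h, _⟩
            · exact h
            · exact absurd h (Set.disjoint_left.mp hdisj hx₁A)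
          rcases hmemB b hbB with rfl | rfl
          · exact Or.inr rfl
          · exact absurd hab hm1
        · have hbA : b ∈ A := by
            rcases hcross a b hab with ⟨h, _⟩ | ⟨_, h⟩
            · exact absurd h (Set.disjoint_left.mp hdisj.symm hy₁B)
            · exact h
          rcases hmemA b hbA with rfl | rfl
          · exact Or.inl rfl
          · exact absurd hab.symm hm2
      obtain ⟨wk⟩ := hconn.preconnected x₁ x₂
      have := walk_closed hclosed wk (by simp)
      simp only [Set.mem_insert_iff, Set.mem_singleton_iff] at this
      rcases this with h | h
      · exact hx h.symm
      · exact h21 h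
    · -- x₁ ~ y₂, x₂ ~ y₁ with misses: disconnected
      have hm1 : ¬ G.Adj x₁ y₁ := fun h => hr1 ⟨h, ha1⟩
      have hm2 : ¬ G.Adj x₂ y₂ := fun h => hr2 ⟨ha2, h⟩
      have hclosed : ∀ a ∈ ({x₁, y₂} : Set V), ∀ b, G.Adj a b → b ∈ ({x₁, y₂} : Set V) := by
        intro a ha b hab
        simp only [Set.mem_insert_iff, Set.mem_singleton_iff] at ha ⊢
        rcases ha with rfl | rfl
        · have hbB : b ∈ B := by
            rcases hcross a b hab with ⟨_, h⟩ | ⟨h, _⟩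
            · exact h
            · exact absurd h (Set.disjoint_left.mp hdisj hx₁A)
          rcases hmemB b hbB with rfl | rfl
          · exact absurd hab hm1
          · exact Or.inr rfl
        · have hbA : b ∈ A := by
            rcases hcross a b hab with ⟨h, _⟩ | ⟨_, h⟩
            · exact absurd h (Set.disjoint_left.mp hdisj.symm hy₂B)
            · exact h
          rcases hmemA b hbA with rfl | rfl
          · exact Or.inl rfl
          · exact absurd hab.symm hm2
      obtain ⟨wk⟩ := hconn.preconnected x₁ x₂
      have := walk_closed hclosed wk (by simp)
      simp only [Set.mem_insert_iff, Set.mem_singleton_iff] at this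
      rcases this with h | h
      · exact hx h.symm
      · exact h22 h
    · -- both adjacent to y₂ only
      have hm1 : ¬ G.Adj x₁ y₁ := fun h => hr1 ⟨h, ha1⟩
      have hm2 : ¬ G.Adj x₂ y₁ := fun h => hr2 ⟨h, ha2⟩
      rcases hny y₁ hy₁B with h | h
      · exact hm1 h.symm
      · exact hm2 h.symm
  obtain ⟨u, v, huA, hvB, hufull, hvfull⟩ := hgood
  have hadjuv : G.Adj u v := hufull v hvB
  refine hcrit u v hadjuv ?_
  have huvne : u ≠ v := mem_ne_of_disjoint hdisj huA hvB
  have hcross' : ∀ p q, (G.deleteEdges {s(u, v)}).Adj p q →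
      (p ∈ A ∧ q ∈ B) ∨ (p ∈ B ∧ q ∈ A) :=
    fun p q h => hcross p q (SimpleGraph.deleteEdges_adj.mp h).1
  have hdeg' : ∀ w : V, ∃ z, (G.deleteEdges {s(u, v)}).Adj w z := by
    intro w
    by_cases hwu : w = u
    · subst hwu
      -- pick the element of B other than v
      rcases hmemB v hvB with rfl | rfl
      · exact ⟨y₂, adj_del (hufull y₂ hy₂B) (Or.inr hy.symm)
          (Or.inl (mem_ne_of_disjoint hdisj huA hy₁B))⟩
      · exact ⟨y₁, adj_del (hufull y₁ hy₁B) (Or.inr hy)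
          (Or.inl (mem_ne_of_disjoint hdisj huA hy₂B))⟩
    · by_cases hwv : w = v
      · subst hwv
        rcases hmemA u huA with rfl | rfl
        · exact ⟨x₂, (adj_del (hvfull x₂ hx₂A)
            (Or.inl huvne.symm) (Or.inr hx.symm) : _)⟩
        · exact ⟨x₁, (adj_del (hvfull x₁ hx₁A)
            (Or.inl huvne.symm) (Or.inr hx) : _)⟩
      · obtain ⟨z, hz⟩ := hdeg w
        exact ⟨z, adj_del hz (Or.inl hwu) (Or.inl hwv)⟩
  exact wins2_22 hdisj hU hcross' hAeq hBeq hx hy hdeg'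

end TwoTwo

theorem stmt13 {V : Type*} [Fintype V] (G : SimpleGraph V)
    (hconn : G.Connected) (hbip : G.Colorable 2) :
    Critical2 G ↔ InFamilyB G := by
  classical
  constructor
  · rintro ⟨⟨hw2, hnw1⟩, hcrit⟩
    obtain ⟨C⟩ := hbip
    set A : Set V := {v | C v = 0} with hAdef
    set B : Set V := {v | C v = 1} with hBdef
    have hfin2 : ∀ i : Fin 2, i = 0 ∨ i = 1 := by decide
    have h01 : (0 : Fin 2) ≠ 1 := by decide
    have hdisj : Disjoint A B := by
      rw [Set.disjoint_left]
      intro v hv hv'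
      simp only [hAdef, hBdef, Set.mem_setOf_eq] at hv hv'
      rw [hv] at hv'
      exact h01 hv'
    have hU : A ∪ B = Set.univ := by
      ext v
      simp only [hAdef, hBdef, Set.mem_union, Set.mem_setOf_eq, Set.mem_univ,
        iff_true]
      exact hfin2 (C v)
    have hcross : ∀ u v, G.Adj u v → (u ∈ A ∧ v ∈ B) ∨ (u ∈ B ∧ v ∈ A) := by
      intro u v h
      have hne := C.valid h
      simp only [hAdef, hBdef, Set.mem_setOf_eq]
      rcases hfin2 (C u) with hu | hu <;> rcases hfin2 (C v) with hv | hv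
      · exact absurd (hu.trans hv.symm) hne
      · exact Or.inl ⟨hu, hv⟩
      · exact Or.inr ⟨hu, hv⟩
      · exact absurd (hu.trans hv.symm) hne
    have hcross' : ∀ u v, G.Adj u v → (u ∈ B ∧ v ∈ A) ∨ (u ∈ A ∧ v ∈ B) :=
      fun u v h => Or.symm (hcross u v h)
    have hU' : B ∪ A = Set.univ := by rw [Set.union_comm]; exact hU
    by_cases hA3 : 3 ≤ A.ncard
    · by_cases hB3 : 3 ≤ B.ncard
      · exact famB_right hdisj hU hcross hA3 hB3 hw2 hcrit
      · by_cases hB1 : B.ncard ≤ 1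
        · exact (small_side_contra hconn hdisj.symm hU' hcross' hB1 hw2 hnw1).elim
        · have hB2 : B.ncard = 2 := by omega
          have hcomp := complete_of_wins2 hdisj.symm hU' hcross' hB2 hA3 hw2
          exact Or.inl ⟨A.ncard, hA3, iso_K2m hdisj.symm hU' hcross' hB2 hcomp⟩
    · by_cases hA1 : A.ncard ≤ 1
      · exact (small_side_contra hconn hdisj hU hcross hA1 hw2 hnw1).elim
      · have hA2 : A.ncard = 2 := by omega
        by_cases hB3 : 3 ≤ B.ncard
        · have hcomp := complete_of_wins2 hdisj hU hcross hA2 hB3 hw2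
          exact Or.inl ⟨B.ncard, hB3, iso_K2m hdisj hU hcross hA2 hcomp⟩
        · by_cases hB1 : B.ncard ≤ 1
          · exact (small_side_contra hconn hdisj.symm hU' hcross' hB1 hw2 hnw1).elim
          · have hB2 : B.ncard = 2 := by omega
            exact (twotwo_contra hconn hdisj hU hcross hA2 hB2 hcrit).elim
  · rintro (⟨m, hm, ⟨e⟩⟩ | ⟨V₁, V₂, hdisj, hU, hm, hn, hcross, hFA2, hdegA, hFB2, hdegB⟩)
    · exact k2m_gives_critical hm e
    · exact famB_gives_critical hdisj hU hm hn hcross hFA2 hdegA hFB2 hdegB
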